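/- Let m ≥ 6 be odd and T ⊆ {1,…,m−1} admissible with #T = 3. Then the subset sums of T represent at least 7 distinct residue classes mod m. -/

import Mathlib

/-- A finite set `T ⊆ {1,…,m−1}` is admissible if no nonempty subset has sum divisible
by `m`. -/
def Admissible (m : ℕ) (T : Finset ℕ) : Prop :=
  T ⊆ Finset.Icc 1 (m - 1) ∧ ∀ U ⊆ T, U.Nonempty → ¬ m ∣ U.sum id

/-- The diversity: the number of residue classes mod `m` represented by subset sums. -/
def diversity (m : ℕ) (T : Finset ℕ) : ℕ :=
  (T.powerset.image (fun U => U.sum id % m)).card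

/-!
A three-element zero-sum-free set `{a, b, c}` in `ZMod m` has at most one coincidence among its
eight subset sums `0, a, b, c, a + b, a + c, b + c, a + b + c`: distinctness and
zero-sum-freeness exclude every equation between two of them except `x = y + z` with
`{x, y, z} = {a, b, c}`, and two such equations would give `2z = 0`, impossible for `m` odd.
Reducing an admissible `T ⊆ {1, …, m - 1}` mod `m` gives such a set.
-/

namespace Finset

section AddCommMonoid

variable {M N : Type*} [AddCommMonoid M] [AddCommMonoid N]

def subsetSums [DecidableEq M] (s : Finset M) : Finset M :=
  s.powerset.image fun U => U.sum id

def ZeroSumFree (s : Finset M) : Prop :=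
  ∀ U ⊆ s, U.Nonempty → U.sum id ≠ 0

lemma subsetSums_empty [DecidableEq M] : subsetSums (∅ : Finset M) = {0} := by
  simp [subsetSums]

lemma subsetSums_insert [DecidableEq M] {a : M} {s : Finset M} (ha : a ∉ s) :
    subsetSums (insert a s) = subsetSums s ∪ (subsetSums s).image (a + ·) := by
  simp only [subsetSums, powerset_insert, image_union, image_image]
  congr 1
  refine image_congr fun U hU => ?_
  simp [sum_insert (fun h => ha (mem_powerset.mp hU h))]

lemma subsetSums_triple [DecidableEq M] {a b c : M} (hab : a ≠ b) (hac : a ≠ c) (hbc : b ≠ c) :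
    subsetSums {a, b, c} = {0, a, b, c, a + b, a + c, b + c, a + b + c} := by
  rw [subsetSums_insert (by simp [hab, hac]), subsetSums_insert (by simp [hbc]),
    ← insert_empty (a := c), subsetSums_insert (notMem_empty c), subsetSums_empty]
  ext x
  simp only [image_union, image_singleton, mem_union, mem_insert, mem_singleton,
    add_zero, add_assoc]
  tauto

lemma subsetSums_image [DecidableEq M] [DecidableEq N] (f : M →+ N) {s : Finset M}
    (hf : Set.InjOn f s) : subsetSums (s.image f) = (subsetSums s).image f := by
  simp only [subsetSums, powerset_image, image_image]
  refine image_congr fun U hU => ?_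
  simp [sum_image (hf.mono (mem_powerset.mp hU)), map_sum]

lemma ZeroSumFree.ne_zero {s : Finset M} (h : ZeroSumFree s) {a : M} (ha : a ∈ s) : a ≠ 0 := by
  simpa using h {a} (singleton_subset_iff.mpr ha) (singleton_nonempty a)

lemma ZeroSumFree.add_ne_zero [DecidableEq M] {s : Finset M} (h : ZeroSumFree s) {a b : M}
    (ha : a ∈ s) (hb : b ∈ s) (hab : a ≠ b) : a + b ≠ 0 := by
  simpa [sum_pair hab] using h {a, b} (insert_subset ha (singleton_subset_iff.mpr hb))
    (insert_nonempty a {b})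

lemma zeroSumFree_image [DecidableEq N] (f : M →+ N) {s : Finset M} (hf : Set.InjOn f s)
    (h : ∀ U ⊆ s, U.Nonempty → f (U.sum id) ≠ 0) : ZeroSumFree (s.image f) := by
  intro U hU hne
  obtain ⟨V, hV, rfl⟩ := subset_image_iff.mp hU
  simpa [sum_image (hf.mono hV), map_sum] using h V hV (image_nonempty.mp hne)

end AddCommMonoid

section AddCommGroup

variable {G : Type*} [AddCommGroup G] [DecidableEq G]

/-- Here `c = a + b` is the only coincidence left possible, so the seven subset sums other than
`c` are pairwise distinct. -/
lemma seven_le_card_subsetSums_of_ne_add {a b c : G} (hab : a ≠ b) (hac : a ≠ c) (hbc : b ≠ c)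
    (hfree : ZeroSumFree {a, b, c}) (ha : a ≠ b + c) (hb : b ≠ a + c) :
    7 ≤ (subsetSums {a, b, c}).card := by
  have ha0 := hfree.ne_zero (a := a) (by simp)
  have hb0 := hfree.ne_zero (a := b) (by simp)
  have hc0 := hfree.ne_zero (a := c) (by simp)
  have hab0 := hfree.add_ne_zero (a := a) (b := b) (by simp) (by simp) hab
  have hac0 := hfree.add_ne_zero (a := a) (b := c) (by simp) (by simp) hac
  have hbc0 := hfree.add_ne_zero (a := b) (b := c) (by simp) (by simp) hbc
  have habc0 : a + b + c ≠ 0 := by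
    simpa [sum_insert, hab, hac, hbc, add_assoc] using hfree _ subset_rfl (insert_nonempty _ _)
  have hnodup : [0, a, b, a + b, a + c, b + c, a + b + c].Nodup := by
    simp only [List.nodup_cons, List.mem_cons, List.not_mem_nil, List.nodup_nil, not_or]
    and_intros <;> grind
  calc 7 = [0, a, b, a + b, a + c, b + c, a + b + c].toFinset.card :=
        (List.toFinset_card_of_nodup hnodup).symm
    _ ≤ (subsetSums {a, b, c}).card := by
        refine card_le_card fun x hx => ?_
        rw [subsetSums_triple hab hac hbc]
        simp only [List.mem_toFinset, List.mem_cons, List.not_mem_nil] at hx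
        simp only [mem_insert, mem_singleton]
        tauto

theorem seven_le_card_subsetSums (h2 : ∀ x : G, x + x = 0 → x = 0) {s : Finset G}
    (hs : s.card = 3) (hfree : ZeroSumFree s) : 7 ≤ (subsetSums s).card := by
  obtain ⟨a, b, c, hab, hac, hbc, rfl⟩ := card_eq_three.mp hs
  have ha0 := hfree.ne_zero (a := a) (by simp)
  have hb0 := hfree.ne_zero (a := b) (by simp)
  have hc0 := hfree.ne_zero (a := c) (by simp)
  by_cases ha : a = b + c
  · have hperm : ({b, c, a} : Finset G) = {a, b, c} := by ext; simp; tauto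
    rw [← hperm] at hfree ⊢
    exact seven_le_card_subsetSums_of_ne_add hbc hab.symm hac.symm hfree
      (fun h => hc0 (h2 c (by grind))) (fun h => hb0 (h2 b (by grind)))
  by_cases hb : b = a + c
  · have hperm : ({a, c, b} : Finset G) = {a, b, c} := by ext; simp; tauto
    rw [← hperm] at hfree ⊢
    exact seven_le_card_subsetSums_of_ne_add hac hab hbc.symm hfree
      (fun h => hc0 (h2 c (by grind))) (fun h => ha0 (h2 a (by grind)))
  exact seven_le_card_subsetSums_of_ne_add hab hac hbc hfree ha hb

end AddCommGroup

end Finset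

open Finset

lemma ZMod.eq_zero_of_add_self_eq_zero {m : ℕ} (hm : Odd m) {x : ZMod m} (h : x + x = 0) :
    x = 0 := by
  have hunit : IsUnit (2 : ZMod m) := by
    exact_mod_cast (ZMod.isUnit_iff_coprime 2 m).mpr (Nat.coprime_two_left.mpr hm)
  exact hunit.mul_right_eq_zero.mp (by rw [two_mul, h])

lemma Admissible.injOn_natCast {m : ℕ} {T : Finset ℕ} (hT : Admissible m T) :
    Set.InjOn (Nat.castAddMonoidHom (ZMod m)) T := by
  intro x hx y hy hxy
  have hxm : x < m := by have := mem_Icc.mp (hT.1 hx); omega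
  have hym : y < m := by have := mem_Icc.mp (hT.1 hy); omega
  simpa [ZMod.natCast_eq_natCast_iff', Nat.mod_eq_of_lt hxm, Nat.mod_eq_of_lt hym] using hxy

lemma Admissible.zeroSumFree_image {m : ℕ} {T : Finset ℕ} (hT : Admissible m T) :
    ZeroSumFree (T.image (Nat.castAddMonoidHom (ZMod m))) :=
  Finset.zeroSumFree_image _ hT.injOn_natCast fun U hU hne => by
    rw [Nat.coe_castAddMonoidHom, Ne, ZMod.natCast_eq_zero_iff]
    exact hT.2 U hU hne

lemma card_subsetSums_image_natCast_le_diversity {m : ℕ} {T : Finset ℕ}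
    (hT : Set.InjOn (Nat.castAddMonoidHom (ZMod m)) T) :
    (subsetSums (T.image (Nat.castAddMonoidHom (ZMod m)))).card ≤ diversity m T := by
  have hfactor : (subsetSums T).image (Nat.castAddMonoidHom (ZMod m)) =
      (T.powerset.image fun U => U.sum id % m).image (Nat.cast : ℕ → ZMod m) := by
    simp [subsetSums, image_image, Function.comp_def]
  rw [subsetSums_image _ hT, hfactor]
  exact card_image_le

theorem stmt_17_general (m : ℕ) (hodd : Odd m)
    (T : Finset ℕ) (hT : Admissible m T) (hcard : T.card = 3) :
    7 ≤ diversity m T := by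
  have hinj := hT.injOn_natCast
  calc 7 ≤ (subsetSums (T.image (Nat.castAddMonoidHom (ZMod m)))).card :=
        seven_le_card_subsetSums (fun _ => ZMod.eq_zero_of_add_self_eq_zero hodd)
          (by rw [card_image_of_injOn hinj, hcard]) hT.zeroSumFree_image
    _ ≤ diversity m T := card_subsetSums_image_natCast_le_diversity hinj

/-- For odd `m ≥ 6` and `T ⊆ {1,…,m−1}` admissible with `#T = 3`, the subset sums of `T`
represent at least 7 residue classes mod `m`. -/
theorem stmt_17 (m : ℕ) (hm : 6 ≤ m) (hodd : Odd m)
    (T : Finset ℕ) (hT : Admissible m T) (hcard : T.card = 3) :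
    7 ≤ diversity m T :=
  stmt_17_general m hodd T hT hcard
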